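/- (Lemma 4.6, value estimation variance bound) On the event 𝓔₁ ∩ 𝓔₂, for every k ∈ {1,…,K}: σ(v_k) ≤ 2H·min{1, 2·max{α,γ}^{k−1} + A_{γ,k−1}/A_∞ + 6H√(ι₁/M)}·1 + σ(V*). Furthermore, σ(v_0) = 0. -/

import Mathlib

/-!
Write `v_k - V* = ((1 - α) w_k - V*) + α (w_k - w_{k-1})`. Unrolling the recursion gives
`s_k = Σ_{j<k} α^(k-1-j) (r + ε_{j+1}) + γ P w_{k-1}`, so both `Q* - (1 - α) s_{k+1}` and
`s_{k+1} - s_k` equal `γ P` applied to the previous error, plus a bias `α^k r` and the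
sampling errors `ε_k`, `E_k`. Taking the maximum over actions (`V* = max_a Q*`,
`w_k = max_a s_k`) does not increase sup-norm errors, so both errors are bounded by discounted
sums; these add up to `2H (2 max(α,γ)^(k-1) + A_{γ,k-1} / A_∞ + 6H √(ι₁/M))`, and trivially
`‖v_k - V*‖ ≤ 2H`. Since `σ` is a seminorm dominated by the sup norm,
`σ(v_k) ≤ σ(v_k - V*) + σ(V*) ≤ ‖v_k - V*‖_∞ + σ(V*)`.
-/

open MeasureTheory ProbabilityTheory Finset Real

noncomputable section

/-- The transition kernel `P` applied to a state-value function: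
`(Pv)(x,a) = Σ_z P(z|x,a) v(z)`. -/
def mdpP {S A : Type} [Fintype S] (P : S → A → S → ℝ) (v : S → ℝ) : S → A → ℝ :=
  fun x a => ∑ z, P x a z * v z

/-- A policy applied to a Q-function: `(poq)(x) = Σ_a po(a|x) q(x,a)`. -/
def polAct {S A : Type} [Fintype A] (po : S → A → ℝ) (q : S → A → ℝ) : S → ℝ :=
  fun x => ∑ a, po x a * q x a

/-- `P` is a transition kernel. -/
def IsKernel {S A : Type} [Fintype S] (P : S → A → S → ℝ) : Prop :=
  (∀ x a z, 0 ≤ P x a z) ∧ ∀ x a, ∑ z, P x a z = 1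

/-- `po` is a (Markov) policy. -/
def IsPolicy {S A : Type} [Fintype A] (po : S → A → ℝ) : Prop :=
  (∀ x a, 0 ≤ po x a) ∧ ∀ x, ∑ a, po x a = 1

/-- The deterministic policy induced by `d : S → A`. -/
def detPol {S A : Type} [DecidableEq A] (d : S → A) : S → A → ℝ :=
  fun x a => if a = d x then 1 else 0

/-- The Bellman operator `T^po q = r + γ P (po q)`. -/
def bellmanOp {S A : Type} [Fintype S] [Fintype A] (P : S → A → S → ℝ) (r : S → A → ℝ)
    (γ : ℝ) (po : S → A → ℝ) (qf : S → A → ℝ) : S → A → ℝ :=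
  fun x a => r x a + γ * mdpP P (polAct po qf) x a

/-- `P^po = Ppo` acting on Q-functions. -/
def Ppi {S A : Type} [Fintype S] [Fintype A] (P : S → A → S → ℝ) (po : S → A → ℝ)
    (qf : S → A → ℝ) : S → A → ℝ :=
  mdpP P (polAct po qf)

/-- `PprodN P po j n` is `P^{po_{j+n-1}} ⋯ P^{po_j}` (`n` factors, identity for `n = 0`);
this is `P_j^i` of the paper with `n = i + 1 - j` factors. -/
def PprodN {S A : Type} [Fintype S] [Fintype A] (P : S → A → S → ℝ)
    (po : ℕ → S → A → ℝ) (j : ℕ) : ℕ → (S → A → ℝ) → S → A → ℝ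
  | 0, qf => qf
  | n + 1, qf => Ppi P (po (j + n)) (PprodN P po j n qf)

/-- The conditional standard deviation `σ(v)(x,a) = √(P(v²)(x,a) − (Pv)(x,a)²)`. -/
def sigmaP {S A : Type} [Fintype S] (P : S → A → S → ℝ) (v : S → ℝ) : S → A → ℝ :=
  fun x a => Real.sqrt (mdpP P (fun z => v z ^ 2) x a - (mdpP P v x a) ^ 2)

/-- `𝒩^po = Σ_{t=0}^∞ (γ po P)^t` acting on state-value functions. -/
def Npol {S A : Type} [Fintype S] [Fintype A] (P : S → A → S → ℝ) (γ : ℝ)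
    (po : S → A → ℝ) (vf : S → ℝ) : S → ℝ :=
  fun x => ∑' t : ℕ, ((fun uf : S → ℝ => fun z => γ * polAct po (mdpP P uf) z)^[t] vf) x


section Averaging

variable {ι : Type*} [Fintype ι] {p f : ι → ℝ} {c : ℝ}

lemma sum_mul_le_of_le (hp : ∀ i, 0 ≤ p i) (hp1 : ∑ i, p i = 1) (hf : ∀ i, f i ≤ c) :
    ∑ i, p i * f i ≤ c :=
  calc ∑ i, p i * f i ≤ ∑ i, p i * c :=
        Finset.sum_le_sum fun i _ => mul_le_mul_of_nonneg_left (hf i) (hp i)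
    _ = c := by rw [← sum_mul, hp1, one_mul]

lemma abs_sum_mul_le_of_abs_le (hp : ∀ i, 0 ≤ p i) (hp1 : ∑ i, p i = 1)
    (hf : ∀ i, |f i| ≤ c) : |∑ i, p i * f i| ≤ c :=
  calc |∑ i, p i * f i| ≤ ∑ i, |p i * f i| := abs_sum_le_sum_abs _ _
    _ = ∑ i, p i * |f i| := sum_congr rfl fun i _ => by rw [abs_mul, abs_of_nonneg (hp i)]
    _ ≤ c := sum_mul_le_of_le hp hp1 hf

lemma sqrt_sum_mul_add_sq_le (hp : ∀ i, 0 ≤ p i) (g : ι → ℝ) :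
    √(∑ i, p i * (f i + g i) ^ 2) ≤ √(∑ i, p i * f i ^ 2) + √(∑ i, p i * g i ^ 2) := by
  have hnorm : ∀ h : ι → ℝ,
      √(∑ i, p i * h i ^ 2)
        = ‖(WithLp.toLp 2 (fun i => √(p i) * h i) : EuclideanSpace ℝ ι)‖ := fun h => by
    simp [EuclideanSpace.norm_eq, mul_pow, Real.sq_sqrt (hp _)]
  rw [hnorm, hnorm, hnorm]
  refine (congrArg norm ?_).trans_le (norm_add_le _ _)
  rw [← WithLp.toLp_add]
  congr 1
  ext i
  exact mul_add _ _ _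

end Averaging

lemma abs_ciSup_sub_ciSup_le {ι : Type*} [Finite ι] [Nonempty ι] {f g : ι → ℝ} {c : ℝ}
    (h : ∀ i, |f i - g i| ≤ c) : |(⨆ i, f i) - ⨆ i, g i| ≤ c := by
  have hsup : ∀ f g : ι → ℝ, (∀ i, f i - g i ≤ c) → (⨆ i, f i) ≤ (⨆ i, g i) + c :=
    fun f g h => ciSup_le fun i => by
      linarith [h i, le_ciSup (Set.finite_range g).bddAbove i]
  rw [abs_le]
  constructor
  · linarith [hsup g f fun i => by linarith [(abs_le.1 (h i)).1]]
  · linarith [hsup f g fun i => (abs_le.1 (h i)).2]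

lemma le_div_one_sub_of_forall_le_add_mul {ι : Type*} [Finite ι] {f : ι → ℝ} {b γ : ℝ}
    (hγ : γ < 1) (h : ∀ m, (∀ j, f j ≤ m) → ∀ i, f i ≤ b + γ * m) (i : ι) :
    f i ≤ b / (1 - γ) := by
  have : Nonempty ι := ⟨i⟩
  obtain ⟨i₀, hi₀⟩ := Finite.exists_max f
  have := h (f i₀) hi₀ i₀
  rw [le_div_iff₀ (by linarith)]
  nlinarith [hi₀ i]

lemma abs_mul_le_mul_of_nonneg_of_abs_le {c t b : ℝ} (hc : 0 ≤ c) (ht : |t| ≤ b) :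
    |c * t| ≤ c * b := by
  rw [abs_mul, abs_of_nonneg hc]
  exact mul_le_mul_of_nonneg_left ht hc

lemma abs_add_mul_sum_range_div_le {ρ γ : ℝ} {f : ℕ → ℝ} (hρ : |ρ| ≤ 1) (hγ0 : 0 ≤ γ)
    (hγ1 : γ < 1) (hf : ∀ m, |f m| ≤ 1 / (1 - γ)) (M : ℕ) :
    |ρ + γ / M * ∑ m ∈ range M, f m| ≤ 1 / (1 - γ) := by
  have hH : 0 ≤ 1 / (1 - γ) := one_div_nonneg.2 (by linarith)
  have hmean : |(∑ m ∈ range M, f m) / M| ≤ 1 / (1 - γ) := by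
    rcases M.eq_zero_or_pos with rfl | hM
    · simpa using hH
    rw [abs_div, Nat.abs_cast, div_le_iff₀ (by positivity)]
    calc |∑ m ∈ range M, f m| ≤ ∑ m ∈ range M, |f m| := abs_sum_le_sum_abs _ _
      _ ≤ ∑ _m ∈ range M, 1 / (1 - γ) := sum_le_sum fun m _ => hf m
      _ = 1 / (1 - γ) * M := by simp [mul_comm]
  calc |ρ + γ / M * ∑ m ∈ range M, f m| = |ρ + γ * ((∑ m ∈ range M, f m) / M)| := by
        rw [div_mul_eq_mul_div, mul_div_assoc]
    _ ≤ 1 + γ * (1 / (1 - γ)) :=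
        (abs_add_le _ _).trans (add_le_add hρ (abs_mul_le_mul_of_nonneg_of_abs_le hγ0 hmean))
    _ = 1 / (1 - γ) := by field_simp [(by linarith : 1 - γ ≠ 0)]; ring

lemma mul_sqrt_div_le_sqrt {u : ℝ} (hu0 : 0 ≤ u) (hu1 : u ≤ 1) (t : ℝ) : u * √(t / u) ≤ √t :=
  calc u * √(t / u) = u / √u * √t := by rw [Real.sqrt_div' t hu0]; ring
    _ = √u * √t := by rw [Real.div_sqrt]
    _ ≤ 1 * √t := by gcongr; exact Real.sqrt_le_one.2 hu1
    _ = √t := one_mul _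

section MDP

variable {S A : Type} {P : S → A → S → ℝ}

lemma mdpP_add [Fintype S] (f g : S → ℝ) (x : S) (a : A) :
    mdpP P (fun z => f z + g z) x a = mdpP P f x a + mdpP P g x a := by
  simp only [mdpP, mul_add, sum_add_distrib]

lemma mdpP_sub [Fintype S] (f g : S → ℝ) (x : S) (a : A) :
    mdpP P (fun z => f z - g z) x a = mdpP P f x a - mdpP P g x a := by
  simp only [mdpP, mul_sub, sum_sub_distrib]

lemma mdpP_const_mul [Fintype S] (c : ℝ) (f : S → ℝ) (x : S) (a : A) :
    mdpP P (fun z => c * f z) x a = c * mdpP P f x a := by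
  simp only [mdpP, mul_sum, mul_left_comm]

lemma polAct_sub [Fintype A] (po q q' : S → A → ℝ) (x : S) :
    polAct po (fun x a => q x a - q' x a) x = polAct po q x - polAct po q' x := by
  simp only [polAct, mul_sub, sum_sub_distrib]

lemma polAct_detPol [Fintype A] [DecidableEq A] (d : S → A) (q : S → A → ℝ) (x : S) :
    polAct (detPol d) q x = q x (d x) := by
  simp [polAct, detPol]

lemma isPolicy_detPol [Fintype A] [DecidableEq A] (d : S → A) : IsPolicy (detPol d) :=
  ⟨fun x a => by unfold detPol; split_ifs <;> norm_num, fun x => by simp [detPol]⟩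

lemma IsKernel.mdpP_le [Fintype S] (hP : IsKernel P) {f : S → ℝ} {c : ℝ} (hf : ∀ z, f z ≤ c)
    (x : S) (a : A) : mdpP P f x a ≤ c :=
  sum_mul_le_of_le (hP.1 x a) (hP.2 x a) hf

lemma IsKernel.abs_mdpP_le [Fintype S] (hP : IsKernel P) {f : S → ℝ} {c : ℝ}
    (hf : ∀ z, |f z| ≤ c) (x : S) (a : A) : |mdpP P f x a| ≤ c :=
  abs_sum_mul_le_of_abs_le (hP.1 x a) (hP.2 x a) hf

lemma IsPolicy.polAct_le [Fintype A] {po q : S → A → ℝ} (hpo : IsPolicy po) {x : S} {c : ℝ}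
    (hq : ∀ a, q x a ≤ c) : polAct po q x ≤ c :=
  sum_mul_le_of_le (hpo.1 x) (hpo.2 x) hq

lemma IsPolicy.abs_polAct_le [Fintype A] {po q : S → A → ℝ} (hpo : IsPolicy po) {x : S} {c : ℝ}
    (hq : ∀ a, |q x a| ≤ c) : |polAct po q x| ≤ c :=
  abs_sum_mul_le_of_abs_le (hpo.1 x) (hpo.2 x) hq

lemma IsPolicy.polAct_le_iSup [Fintype A] {po : S → A → ℝ} (hpo : IsPolicy po)
    (q : S → A → ℝ) (x : S) : polAct po q x ≤ ⨆ a, q x a :=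
  hpo.polAct_le fun a => le_ciSup (Set.finite_range _).bddAbove a

lemma IsKernel.sigmaP_eq_sqrt_sum_mul_sub_sq [Fintype S] (hP : IsKernel P) (f : S → ℝ)
    (x : S) (a : A) :
    sigmaP P f x a = √(∑ z, P x a z * (f z - mdpP P f x a) ^ 2) := by
  have expand : ∀ z, P x a z * (f z - mdpP P f x a) ^ 2
      = P x a z * f z ^ 2 - 2 * mdpP P f x a * (P x a z * f z) + mdpP P f x a ^ 2 * P x a z :=
    fun z => by ring
  rw [sigmaP, sum_congr rfl fun z _ => expand z]
  simp only [sum_add_distrib, sum_sub_distrib, ← mul_sum, hP.2 x a]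
  simp only [mdpP]
  congr 1
  ring

lemma IsKernel.sigmaP_add_le [Fintype S] (hP : IsKernel P) (f g : S → ℝ) (x : S) (a : A) :
    sigmaP P (fun z => f z + g z) x a ≤ sigmaP P f x a + sigmaP P g x a := by
  simp only [hP.sigmaP_eq_sqrt_sum_mul_sub_sq, mdpP_add]
  convert sqrt_sum_mul_add_sq_le (hP.1 x a) (fun z => g z - mdpP P g x a) using 4 with z
  ring

lemma IsKernel.sigmaP_le_of_abs_le [Fintype S] (hP : IsKernel P) {f : S → ℝ} {c : ℝ}
    (hc : 0 ≤ c) (hf : ∀ z, |f z| ≤ c) (x : S) (a : A) : sigmaP P f x a ≤ c := by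
  have hsq : mdpP P (fun z => f z ^ 2) x a ≤ c ^ 2 :=
    hP.mdpP_le (fun z => by rw [← sq_abs]; exact pow_le_pow_left₀ (abs_nonneg _) (hf z) 2) x a
  calc sigmaP P f x a ≤ √(c ^ 2) :=
        Real.sqrt_le_sqrt (by nlinarith [sq_nonneg (mdpP P f x a)])
    _ = c := Real.sqrt_sq hc

end MDP

section Bellman

variable {S A : Type} [Fintype S] [Fintype A] {P : S → A → S → ℝ} {r : S → A → ℝ} {γ : ℝ}

lemma IsKernel.abs_le_of_bellmanOp_eq (hP : IsKernel P) {po q : S → A → ℝ} (hpo : IsPolicy po)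
    (hr : ∀ x a, |r x a| ≤ 1) (hγ0 : 0 ≤ γ) (hγ1 : γ < 1) (hq : bellmanOp P r γ po q = q)
    (x : S) (a : A) : |q x a| ≤ 1 / (1 - γ) := by
  refine le_div_one_sub_of_forall_le_add_mul (f := fun p : S × A => |q p.1 p.2|) hγ1 ?_ (x, a)
  rintro m hm ⟨x, a⟩
  rw [← hq]
  exact (abs_add_le _ _).trans <| add_le_add (hr x a) <| abs_mul_le_mul_of_nonneg_of_abs_le hγ0 <|
    hP.abs_mdpP_le (fun z => hpo.abs_polAct_le fun a => hm (z, a)) x a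

lemma IsKernel.le_of_le_bellmanOp (hP : IsKernel P) {po q q' : S → A → ℝ} (hpo : IsPolicy po)
    (hγ0 : 0 ≤ γ) (hγ1 : γ < 1) (hq : ∀ x a, q x a ≤ bellmanOp P r γ po q x a)
    (hq' : bellmanOp P r γ po q' = q') (x : S) (a : A) : q x a ≤ q' x a := by
  suffices h : q x a - q' x a ≤ 0 / (1 - γ) by rwa [zero_div, sub_nonpos] at h
  refine le_div_one_sub_of_forall_le_add_mul (f := fun p : S × A => q p.1 p.2 - q' p.1 p.2)
    hγ1 ?_ (x, a)
  rintro m hm ⟨x, a⟩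
  have hdiff : bellmanOp P r γ po q x a - bellmanOp P r γ po q' x a
      = γ * mdpP P (polAct po fun x a => q x a - q' x a) x a := by
    simp only [bellmanOp, funext (polAct_sub po q q'), mdpP_sub]
    ring
  calc q x a - q' x a ≤ bellmanOp P r γ po q x a - bellmanOp P r γ po q' x a := by
        rw [hq']; exact sub_le_sub_right (hq x a) _
    _ ≤ 0 + γ * m := by
        rw [hdiff, zero_add]
        exact mul_le_mul_of_nonneg_left
          (hP.mdpP_le (fun z => hpo.polAct_le fun a => hm (z, a)) x a) hγ0

theorem IsKernel.polAct_optimal_eq_iSup [Nonempty A] (hP : IsKernel P) (hγ0 : 0 ≤ γ)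
    (hγ1 : γ < 1) {Qpol : (S → A → ℝ) → S → A → ℝ}
    (hQ : ∀ po, IsPolicy po → bellmanOp P r γ po (Qpol po) = Qpol po)
    {pstar : S → A → ℝ} (hpstar : IsPolicy pstar)
    (hopt : ∀ po, IsPolicy po → ∀ x, polAct po (Qpol po) x ≤ polAct pstar (Qpol pstar) x)
    (x : S) : polAct pstar (Qpol pstar) x = ⨆ a, Qpol pstar x a := by
  classical
  have hQstar := hQ pstar hpstar
  set Q := Qpol pstar
  choose d hd using fun x => Finite.exists_max (Q x)
  have hsup : ∀ x, (⨆ a, Q x a) = Q x (d x) := fun x =>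
    le_antisymm (ciSup_le (hd x)) (le_ciSup (Set.finite_range _).bddAbove _)
  have hQ_le : ∀ x a, Q x a ≤ bellmanOp P r γ (detPol d) Q x a := fun x a => by
    rw [← congrFun (congrFun hQstar x) a]
    simp only [bellmanOp, funext (polAct_detPol d Q)]
    gcongr
    exact sum_le_sum fun z _ => mul_le_mul_of_nonneg_left
      ((hpstar.polAct_le_iSup Q z).trans_eq (hsup z)) (hP.1 x a z)
  refine le_antisymm (hpstar.polAct_le_iSup Q x) ?_
  calc (⨆ a, Q x a) = Q x (d x) := hsup x
    _ ≤ Qpol (detPol d) x (d x) :=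
        hP.le_of_le_bellmanOp (isPolicy_detPol d) hγ0 hγ1 hQ_le (hQ _ (isPolicy_detPol d)) _ _
    _ = polAct (detPol d) (Qpol (detPol d)) x := (polAct_detPol d _ x).symm
    _ ≤ polAct pstar Q x := hopt _ (isPolicy_detPol d) x

end Bellman

/-- The solution of `u_{n+1} = γ u_n + c_n`, `u_0 = 0`. -/
def discountedSum (γ : ℝ) (c : ℕ → ℝ) (n : ℕ) : ℝ :=
  ∑ i ∈ range n, γ ^ (n - 1 - i) * c i

namespace discountedSum

variable {γ : ℝ} {c d : ℕ → ℝ}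

@[simp]
lemma zero : discountedSum γ c 0 = 0 := by simp [discountedSum]

lemma succ (n : ℕ) : discountedSum γ c (n + 1) = γ * discountedSum γ c n + c n := by
  rw [discountedSum, sum_range_succ, Nat.add_sub_cancel, Nat.sub_self, pow_zero, one_mul,
    discountedSum, mul_sum]
  congr 1
  refine sum_congr rfl fun i hi => ?_
  rw [← mul_assoc, ← pow_succ', show n - 1 - i + 1 = n - i by have := mem_range.1 hi; omega]

lemma add (n : ℕ) :
    discountedSum γ (fun i => c i + d i) n = discountedSum γ c n + discountedSum γ d n := by
  simp only [discountedSum, mul_add, sum_add_distrib]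

lemma const_mul (b : ℝ) (n : ℕ) :
    discountedSum γ (fun i => b * c i) n = b * discountedSum γ c n := by
  simp only [discountedSum, mul_sum, mul_left_comm]

lemma const (b : ℝ) (n : ℕ) :
    discountedSum γ (fun _ => b) n = b * ∑ i ∈ range n, γ ^ i := by
  rw [discountedSum, ← sum_mul, mul_comm, sum_range_reflect (γ ^ ·) n]

lemma const_le (hγ0 : 0 ≤ γ) (hγ1 : γ < 1) {b : ℝ} (hb : 0 ≤ b) (n : ℕ) :
    discountedSum γ (fun _ => b) n ≤ b / (1 - γ) := by
  rw [const, ← mul_one_div]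
  refine mul_le_mul_of_nonneg_left ?_ hb
  rw [le_div_iff₀ (by linarith), mul_comm, mul_neg_geom_sum]
  linarith [pow_nonneg hγ0 n]

lemma pow_succ (α : ℝ) (n : ℕ) :
    discountedSum γ (fun i => α ^ i) (n + 1) = ∑ j ∈ range n, γ ^ (n - j) * α ^ j + α ^ n := by
  simp [discountedSum, sum_range_succ]

lemma abs_le_of_contraction {ι : Type*} {X : ℕ → ι → ℝ} {B₀ : ℝ} {n : ℕ}
    (h₀ : ∀ i, |X 0 i| ≤ B₀)
    (hstep : ∀ k < n, ∀ B, (∀ i, |X k i| ≤ B) → ∀ i, |X (k + 1) i| ≤ γ * B + c k) :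
    ∀ i, |X n i| ≤ γ ^ n * B₀ + discountedSum γ c n := by
  induction n with
  | zero => simpa using h₀
  | succ n ih =>
    intro i
    have := hstep n n.lt_succ_self _ (ih fun k hk => hstep k (by omega)) i
    rw [succ, _root_.pow_succ']
    linarith

end discountedSum

section Budget

variable {α γ H : ℝ}

lemma sub_mul_sum_pow_mul_pow (α γ : ℝ) (n : ℕ) :
    (α - γ) * ∑ j ∈ range n, γ ^ (n - j) * α ^ j = γ * (α ^ n - γ ^ n) := by
  rw [← geom_sum₂_mul, mul_comm (α - γ), ← mul_assoc, mul_sum]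
  congr 1
  refine sum_congr rfl fun j hj => ?_
  rw [show n - j = n - 1 - j + 1 by have := mem_range.1 hj; omega, pow_succ]
  ring

lemma mdvi_bias_le (hα0 : 0 ≤ α) (hα1 : α < 1) (hγ0 : 0 ≤ γ) (hγ1 : γ < 1)
    (hH : H = 1 / (1 - γ)) (n : ℕ) :
    let A := ∑ j ∈ range n, γ ^ (n - j) * α ^ j
    γ ^ (n + 1) * H + 2 * α ^ (n + 1) + 2 * α * A
      ≤ 4 * H * max α γ ^ n + 2 * H * ((1 - α) * A) := by
  intro A
  have hA0 : 0 ≤ A := sum_nonneg fun j _ => by positivity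
  have hHγ : (1 - γ) * H = 1 := by rw [hH]; field_simp [(by linarith : 1 - γ ≠ 0)]
  have hH1 : 1 ≤ H := by nlinarith
  by_cases hc : α ≤ H * (1 - α)
  · have hαm : α ^ (n + 1) ≤ max α γ ^ n := (pow_le_pow_of_le_one hα0 hα1.le n.le_succ).trans
      (pow_le_pow_left₀ hα0 (le_max_left α γ) n)
    have hγm : γ ^ (n + 1) ≤ max α γ ^ n := (pow_le_pow_of_le_one hγ0 hγ1.le n.le_succ).trans
      (pow_le_pow_left₀ hγ0 (le_max_right α γ) n)
    nlinarith [mul_le_mul_of_nonneg_right hc hA0,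
      mul_le_mul_of_nonneg_left hγm (by linarith : 0 ≤ H),
      pow_nonneg (le_max_of_le_left hα0 : 0 ≤ max α γ) n]
  · -- `α > H (1 - α)` forces `γ < α`, and then `(α - γ) A ≤ γ α^n`
    push Not at hc
    have hγα : γ < α := by nlinarith
    rw [max_eq_left hγα.le]
    have htel : (α - γ) * A ≤ γ * α ^ n := by
      nlinarith [sub_mul_sum_pow_mul_pow α γ n, pow_nonneg hγ0 n]
    have hcoef : α - H * (1 - α) ≤ α * H * (α - γ) := by nlinarith [sq_nonneg (1 - α)]
    have hA : (α - H * (1 - α)) * A ≤ α * H * (γ * α ^ n) :=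
      (mul_le_mul_of_nonneg_right hcoef hA0).trans <| by
        rw [mul_assoc]; exact mul_le_mul_of_nonneg_left htel (by positivity)
    have hγ : γ ^ (n + 1) * H ≤ γ * α ^ n * H := by
      rw [pow_succ']; gcongr
    have hcoef' : γ * H + 2 * α + 2 * α * γ * H ≤ 4 * H := by nlinarith
    have := mul_le_mul_of_nonneg_left hcoef' (pow_nonneg hα0 n)
    rw [pow_succ α]
    linarith

lemma mdvi_error_le (hα0 : 0 ≤ α) (hα1 : α < 1) (hγ0 : 0 ≤ γ) (hγ1 : γ < 1)
    (hH : H = 1 / (1 - γ)) {EB e : ℝ} (hEB0 : 0 ≤ EB) (hEB : (1 - α) * EB ≤ e) (n : ℕ) :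
    γ ^ (n + 1) * H + discountedSum γ (fun i => α ^ (i + 1) + (1 - α) * EB) (n + 1)
      + α * discountedSum γ (fun i => α ^ i + ((1 - α) * EB + e)) (n + 1)
      ≤ 2 * H * (2 * max α γ ^ n + (∑ j ∈ range n, γ ^ (n - j) * α ^ j) / (1 / (1 - α))
        + 2 * e) := by
  have hc0 : 0 ≤ (1 - α) * EB := mul_nonneg (sub_nonneg.2 hα1.le) hEB0
  have he : 0 ≤ e := hc0.trans hEB
  have hH0 : 0 ≤ H := by rw [hH]; exact one_div_nonneg.2 (by linarith)
  have hbias := mdvi_bias_le hα0 hα1 hγ0 hγ1 hH n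
  have hpow : discountedSum γ (fun i => α ^ (i + 1)) (n + 1)
      = α * discountedSum γ (fun i => α ^ i) (n + 1) := by
    simp only [pow_succ', discountedSum.const_mul]
  have hc1 : discountedSum γ (fun _ => (1 - α) * EB) (n + 1) ≤ e * H :=
    (discountedSum.const_le hγ0 hγ1 hc0 _).trans <| by rw [hH, mul_one_div]; gcongr
  have hc2 : discountedSum γ (fun _ => (1 - α) * EB + e) (n + 1) ≤ 2 * e * H :=
    (discountedSum.const_le hγ0 hγ1 (by linarith) _).trans <| by
      rw [hH, mul_one_div]; gcongr; linarith
  rw [discountedSum.add, discountedSum.add, hpow, discountedSum.pow_succ, div_div_eq_mul_div,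
    div_one]
  rw [pow_succ α] at hbias
  nlinarith [mul_le_mul_of_nonneg_left hc2 hα0, mul_nonneg he hH0]

end Budget

/-- The MDVI recursion, with the sample mean `(γ/M) Σ_m v_k(y_{k,m,x,a})` written as
`γ (P v_k)(x,a) + ε_{k+1}(x,a)`. -/
structure IsMDVIIterates {S A : Type} [Fintype S] (P : S → A → S → ℝ) (r : S → A → ℝ)
    (α γ : ℝ) (w v : ℕ → S → ℝ) (sq εf : ℕ → S → A → ℝ) : Prop where
  sq_zero : ∀ x a, sq 0 x a = 0
  w_zero : ∀ x, w 0 x = 0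
  w_succ : ∀ k x, w (k + 1) x = ⨆ a, sq (k + 1) x a
  v_eq : ∀ k x, v k x = w k x - α * w (k - 1) x
  sq_succ : ∀ k x a,
    sq (k + 1) x a = r x a + γ * mdpP P (v k) x a + εf (k + 1) x a + α * sq k x a

namespace IsMDVIIterates

variable {S A : Type} [Fintype S] {P : S → A → S → ℝ} {r : S → A → ℝ} {α γ : ℝ}
  {w v : ℕ → S → ℝ} {sq εf : ℕ → S → A → ℝ}

lemma w_eq_iSup [Nonempty A] (h : IsMDVIIterates P r α γ w v sq εf) (k : ℕ) (x : S) :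
    w k x = ⨆ a, sq k x a := by
  cases k with
  | zero => simp [h.w_zero, h.sq_zero]
  | succ k => exact h.w_succ k x

lemma v_zero (h : IsMDVIIterates P r α γ w v sq εf) (x : S) : v 0 x = 0 := by
  simp [h.v_eq, h.w_zero]

lemma w_eq_v_add (h : IsMDVIIterates P r α γ w v sq εf) (k : ℕ) :
    w k = fun z => v k z + α * w (k - 1) z :=
  funext fun z => by rw [h.v_eq]; ring

lemma sq_eq (h : IsMDVIIterates P r α γ w v sq εf) (k : ℕ) (x : S) (a : A) :
    sq k x a = discountedSum α (fun j => r x a + εf (j + 1) x a) k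
      + γ * mdpP P (w (k - 1)) x a := by
  induction k with
  | zero => simp [h.sq_zero, h.w_zero, mdpP]
  | succ k ih =>
    rw [h.sq_succ, ih, discountedSum.succ, Nat.add_sub_cancel, h.w_eq_v_add k, mdpP_add,
      mdpP_const_mul]
    ring

lemma sq_succ_sub_sq (h : IsMDVIIterates P r α γ w v sq εf) (k : ℕ) (x : S) (a : A) :
    sq (k + 1) x a - sq k x a = α ^ k * r x a + γ * mdpP P (fun z => w k z - w (k - 1) z) x a
      + εf (k + 1) x a - (1 - α) * discountedSum α (fun j => εf (j + 1) x a) k := by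
  rw [h.sq_succ, h.sq_eq k, discountedSum.add, discountedSum.const, mdpP_sub, h.w_eq_v_add k,
    mdpP_add, mdpP_const_mul]
  linear_combination -r x a * mul_neg_geom_sum α k

lemma sub_one_sub_mul_sq_succ (h : IsMDVIIterates P r α γ w v sq εf) {Q : S → A → ℝ}
    {V : S → ℝ} (hQ : ∀ x a, Q x a = r x a + γ * mdpP P V x a) (k : ℕ) (x : S) (a : A) :
    Q x a - (1 - α) * sq (k + 1) x a = α ^ (k + 1) * r x a
      - (1 - α) * discountedSum α (fun j => εf (j + 1) x a) (k + 1)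
      - γ * mdpP P (fun z => (1 - α) * w k z - V z) x a := by
  rw [hQ, h.sq_eq, Nat.add_sub_cancel, discountedSum.add, discountedSum.const, mdpP_sub,
    mdpP_const_mul]
  linear_combination -r x a * mul_neg_geom_sum α (k + 1)

variable [Fintype A] [Nonempty A]

lemma abs_v_le (h : IsMDVIIterates P r α γ w v sq εf) (hα0 : 0 ≤ α) {H : ℝ} (hH : 0 ≤ H)
    (hstep : ∀ k, (∀ z, |v k z| ≤ H) → ∀ x a, |sq (k + 1) x a - α * sq k x a| ≤ H)
    (k : ℕ) (z : S) : |v k z| ≤ H := by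
  induction k generalizing z with
  | zero => simpa [h.v_zero] using hH
  | succ k ih =>
    rw [h.v_eq, Nat.add_sub_cancel, h.w_eq_iSup, h.w_eq_iSup, Real.mul_iSup_of_nonneg hα0]
    exact abs_ciSup_sub_ciSup_le (hstep k ih z)

lemma abs_one_sub_mul_w_sub_le (h : IsMDVIIterates P r α γ w v sq εf) (hP : IsKernel P)
    (hr : ∀ x a, |r x a| ≤ 1) (hα0 : 0 ≤ α) (hα1 : α < 1) (hγ0 : 0 ≤ γ) {Q : S → A → ℝ}
    {V : S → ℝ} (hQ : ∀ x a, Q x a = r x a + γ * mdpP P V x a) (hV : ∀ x, V x = ⨆ a, Q x a)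
    {H : ℝ} (hVH : ∀ x, |V x| ≤ H) {n : ℕ} {EB : ℝ}
    (hE : ∀ k < n, ∀ x a, |discountedSum α (fun j => εf (j + 1) x a) (k + 1)| ≤ EB) :
    ∀ x, |(1 - α) * w n x - V x|
      ≤ γ ^ n * H + discountedSum γ (fun i => α ^ (i + 1) + (1 - α) * EB) n := by
  refine discountedSum.abs_le_of_contraction (X := fun k x => (1 - α) * w k x - V x)
    (fun x => by simpa [h.w_zero] using hVH x) fun k hk B hB x => ?_
  rw [h.w_succ, hV, Real.mul_iSup_of_nonneg (by linarith), abs_sub_comm]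
  refine abs_ciSup_sub_ciSup_le fun a => ?_
  rw [h.sub_one_sub_mul_sq_succ hQ]
  have hr' := abs_le.1 <| abs_mul_le_mul_of_nonneg_of_abs_le (pow_nonneg hα0 (k + 1)) (hr x a)
  have hE' := abs_le.1 <| abs_mul_le_mul_of_nonneg_of_abs_le (sub_nonneg.2 hα1.le) (hE k hk x a)
  have hB' := abs_le.1 <| abs_mul_le_mul_of_nonneg_of_abs_le hγ0 (hP.abs_mdpP_le hB x a)
  exact abs_le.2 ⟨by linarith, by linarith⟩

lemma abs_w_sub_w_pred_le (h : IsMDVIIterates P r α γ w v sq εf) (hP : IsKernel P)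
    (hr : ∀ x a, |r x a| ≤ 1) (hα0 : 0 ≤ α) (hα1 : α < 1) (hγ0 : 0 ≤ γ) {n : ℕ} {EB e : ℝ}
    (hE : ∀ k < n, ∀ x a, |discountedSum α (fun j => εf (j + 1) x a) k| ≤ EB)
    (hε : ∀ k < n, ∀ x a, |εf (k + 1) x a| ≤ e) :
    ∀ x, |w n x - w (n - 1) x| ≤ discountedSum γ (fun i => α ^ i + ((1 - α) * EB + e)) n := by
  have := discountedSum.abs_le_of_contraction (γ := γ) (n := n)
    (c := fun i => α ^ i + ((1 - α) * EB + e)) (X := fun k x => w k x - w (k - 1) x) (B₀ := 0)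
    (by simp) fun k hk B hB x => ?_
  · simpa using this
  rw [Nat.add_sub_cancel, h.w_eq_iSup, h.w_eq_iSup]
  refine abs_ciSup_sub_ciSup_le fun a => ?_
  rw [h.sq_succ_sub_sq]
  have hr' := abs_le.1 <| abs_mul_le_mul_of_nonneg_of_abs_le (pow_nonneg hα0 k) (hr x a)
  have hE' := abs_le.1 <| abs_mul_le_mul_of_nonneg_of_abs_le (sub_nonneg.2 hα1.le) (hE k hk x a)
  have hB' := abs_le.1 <| abs_mul_le_mul_of_nonneg_of_abs_le hγ0 (hP.abs_mdpP_le hB x a)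
  have hε' := abs_le.1 (hε k hk x a)
  exact abs_le.2 ⟨by linarith, by linarith⟩

lemma abs_v_succ_sub_le (h : IsMDVIIterates P r α γ w v sq εf) (hP : IsKernel P)
    (hr : ∀ x a, |r x a| ≤ 1) (hα0 : 0 ≤ α) (hα1 : α < 1) (hγ0 : 0 ≤ γ) (hγ1 : γ < 1) {H : ℝ}
    (hH : H = 1 / (1 - γ)) {po Q : S → A → ℝ} (hpo : IsPolicy po)
    (hQ : bellmanOp P r γ po Q = Q) (hV : ∀ x, polAct po Q x = ⨆ a, Q x a) {n : ℕ}
    (hvH : ∀ z, |v (n + 1) z| ≤ H) {EB e : ℝ}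
    (hE : ∀ k ∈ Icc 1 (n + 1), ∀ x a, |discountedSum α (fun j => εf (j + 1) x a) k| ≤ EB)
    (hε : ∀ k ∈ Icc 1 (n + 1), ∀ x a, |εf k x a| ≤ e) (hEB : (1 - α) * EB ≤ e) (z : S) :
    |v (n + 1) z - polAct po Q z| ≤ 2 * H * min 1 (2 * max α γ ^ n
      + (∑ j ∈ range n, γ ^ (n - j) * α ^ j) / (1 / (1 - α)) + 2 * e) := by
  have hH0 : 0 ≤ H := by rw [hH]; exact one_div_nonneg.2 (by linarith)
  have hVH : ∀ z, |polAct po Q z| ≤ H := fun z =>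
    hH ▸ hpo.abs_polAct_le fun a => hP.abs_le_of_bellmanOp_eq hpo hr hγ0 hγ1 hQ z a
  have hEB0 : 0 ≤ EB := (abs_nonneg _).trans (hE 1 (by simp) z (Classical.arbitrary A))
  have hw := h.abs_one_sub_mul_w_sub_le hP hr hα0 hα1 hγ0
    (fun x a => (congrFun (congrFun hQ x) a).symm) hV hVH (n := n + 1)
    (fun k hk => hE (k + 1) (mem_Icc.2 ⟨by omega, by omega⟩)) z
  have hz := h.abs_w_sub_w_pred_le hP hr hα0 hα1 hγ0 (n := n + 1) (e := e)
    (fun k hk x a => by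
      rcases k.eq_zero_or_pos with rfl | hk0
      · simpa using hEB0
      · exact hE k (mem_Icc.2 ⟨hk0, hk.le⟩) x a)
    (fun k hk => hε (k + 1) (mem_Icc.2 ⟨by omega, by omega⟩)) z
  rw [mul_min_of_nonneg _ _ (by positivity), mul_one]
  refine le_min ((abs_sub _ _).trans (by linarith [hvH z, hVH z])) ?_
  have hsplit : v (n + 1) z - polAct po Q z
      = ((1 - α) * w (n + 1) z - polAct po Q z) + α * (w (n + 1) z - w (n + 1 - 1) z) := by
    rw [h.v_eq, Nat.add_sub_cancel]; ring
  rw [hsplit]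
  refine (abs_add_le _ _).trans (le_trans ?_ (mdvi_error_le hα0 hα1 hγ0 hγ1 hH hEB0 hEB n))
  linarith [abs_mul_le_mul_of_nonneg_of_abs_le hα0 hz]

theorem sigmaP_succ_le (h : IsMDVIIterates P r α γ w v sq εf) (hP : IsKernel P)
    (hr : ∀ x a, |r x a| ≤ 1) (hα0 : 0 ≤ α) (hα1 : α < 1) (hγ0 : 0 ≤ γ) (hγ1 : γ < 1) {H : ℝ}
    (hH : H = 1 / (1 - γ)) {po Q : S → A → ℝ} (hpo : IsPolicy po)
    (hQ : bellmanOp P r γ po Q = Q) (hV : ∀ x, polAct po Q x = ⨆ a, Q x a) {n : ℕ}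
    (hvH : ∀ z, |v (n + 1) z| ≤ H) {EB e : ℝ}
    (hE : ∀ k ∈ Icc 1 (n + 1), ∀ x a, |discountedSum α (fun j => εf (j + 1) x a) k| ≤ EB)
    (hε : ∀ k ∈ Icc 1 (n + 1), ∀ x a, |εf k x a| ≤ e) (hEB : (1 - α) * EB ≤ e)
    (x : S) (a : A) :
    sigmaP P (v (n + 1)) x a ≤ 2 * H * min 1 (2 * max α γ ^ n
      + (∑ j ∈ range n, γ ^ (n - j) * α ^ j) / (1 / (1 - α)) + 2 * e)
      + sigmaP P (polAct po Q) x a := by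
  have hdiff := h.abs_v_succ_sub_le hP hr hα0 hα1 hγ0 hγ1 hH hpo hQ hV hvH hE hε hEB
  calc sigmaP P (v (n + 1)) x a
      ≤ sigmaP P (fun z => v (n + 1) z - polAct po Q z) x a + sigmaP P (polAct po Q) x a := by
        simpa using hP.sigmaP_add_le (fun z => v (n + 1) z - polAct po Q z) (polAct po Q) x a
    _ ≤ _ := add_le_add_left
        (hP.sigmaP_le_of_abs_le ((abs_nonneg _).trans (hdiff x)) hdiff x a) _

end IsMDVIIterates

theorem mdvi_value_estimation_variance_bound_general
    (α : ℝ) (hα0 : 0 ≤ α) (hα1 : α < 1)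
    (S A : Type) [Fintype S] [Fintype A]
    (P : S → A → S → ℝ) (hP : IsKernel P)
    (r : S → A → ℝ) (hr : ∀ x a, |r x a| ≤ 1)
    (γ H : ℝ) (hγ0 : 0 ≤ γ) (hγ1 : γ < 1) (hH : H = 1 / (1 - γ))
    (Qpol : (S → A → ℝ) → S → A → ℝ)
    (hQ : ∀ po, IsPolicy po → bellmanOp P r γ po (Qpol po) = Qpol po)
    (pstar : S → A → ℝ) (hpstar : IsPolicy pstar)
    (hopt : ∀ po, IsPolicy po → ∀ x, polAct po (Qpol po) x ≤ polAct pstar (Qpol pstar) x)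
    (K M : ℕ)
    (y : ℕ → ℕ → S → A → S)
    (w v : ℕ → S → ℝ) (sq qv : ℕ → S → A → ℝ)
    (hs0 : ∀ x a, sq 0 x a = 0) (hw0 : ∀ x, w 0 x = 0)
    (hv : ∀ k x, v k x = w k x - α * w (k - 1) x)
    (hqv : ∀ k x a, qv (k + 1) x a
      = r x a + (γ / (M : ℝ)) * ∑ m ∈ Finset.range M, v k (y k m x a))
    (hsq : ∀ k x a, sq (k + 1) x a = qv (k + 1) x a + α * sq k x a)
    (hwk : ∀ k x, w (k + 1) x = ⨆ a, sq (k + 1) x a)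
    (εf Ef : ℕ → S → A → ℝ)
    (hεf : ∀ k x a, εf (k + 1) x a
      = (γ / (M : ℝ)) * ∑ m ∈ Finset.range M, v k (y k m x a) - γ * mdpP P (v k) x a)
    (hEf : ∀ k x a, Ef k x a = ∑ j ∈ Finset.range k, α ^ (k - 1 - j) * εf (j + 1) x a)
    (δ : ℝ)
    (hE1 : ∀ k ∈ Finset.Icc 1 K, ∀ x a, |Ef k x a|
      < 3 * H * Real.sqrt (((1 : ℝ) / (1 - α)) *
          Real.log ((8 * K * Fintype.card S * Fintype.card A : ℝ) / δ) / (M : ℝ)))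
    (hE2 : ∀ k ∈ Finset.Icc 1 K, ∀ x a, |εf k x a|
      < 3 * H * Real.sqrt (
          Real.log ((8 * K * Fintype.card S * Fintype.card A : ℝ) / δ) / (M : ℝ)))
    :
    (∀ k ∈ Finset.Icc 1 K, ∀ x a,
      sigmaP P (v k) x a ≤
        2 * H * min 1
          (2 * max α γ ^ (k - 1)
            + (∑ j ∈ Finset.range (k - 1), γ ^ (k - 1 - j) * α ^ j) / ((1 : ℝ) / (1 - α))
            + 6 * H * Real.sqrt (
                Real.log ((8 * K * Fintype.card S * Fintype.card A : ℝ) / δ) / (M : ℝ)))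
        + sigmaP P (polAct pstar (Qpol pstar)) x a) ∧
    (∀ x a, sigmaP P (v 0) x a = 0) := by
  have hrun : IsMDVIIterates P r α γ w v sq εf :=
    ⟨hs0, hw0, hwk, hv, fun k x a => by rw [hsq, hqv, hεf]; ring⟩
  refine ⟨fun k hk x a => ?_, fun x a => by simp [sigmaP, mdpP, hrun.v_zero]⟩
  have : Nonempty A := ⟨a⟩
  obtain ⟨n, rfl⟩ : ∃ n, k = n + 1 := ⟨k - 1, by have := (mem_Icc.1 hk).1; omega⟩
  set L := Real.log ((8 * K * Fintype.card S * Fintype.card A : ℝ) / δ)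
  have hEB : (1 - α) * (3 * H * √(1 / (1 - α) * L / M)) ≤ 3 * H * √(L / M) := by
    rw [mul_left_comm, show 1 / (1 - α) * L / M = L / M / (1 - α) by ring]
    exact mul_le_mul_of_nonneg_left (mul_sqrt_div_le_sqrt (by linarith) (by linarith) _)
      (by rw [hH]; exact mul_nonneg zero_le_three (one_div_nonneg.2 (by linarith)))
  have hvH := hrun.abs_v_le hα0 (hH ▸ one_div_nonneg.2 (by linarith)) fun k hk x a => by
    rw [show sq (k + 1) x a - α * sq k x a = qv (k + 1) x a by rw [hsq]; ring, hqv, hH]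
    exact abs_add_mul_sum_range_div_le (hr x a) hγ0 hγ1 (fun m => hH ▸ hk _) M
  have hsub : Icc 1 (n + 1) ⊆ Icc 1 K := Icc_subset_Icc_right (mem_Icc.1 hk).2
  rw [Nat.add_sub_cancel, show 6 * H * √(L / M) = 2 * (3 * H * √(L / M)) by ring]
  exact hrun.sigmaP_succ_le hP hr hα0 hα1 hγ0 hγ1 hH hpstar (hQ pstar hpstar)
    (hP.polAct_optimal_eq_iSup hγ0 hγ1 hQ hpstar hopt) (hvH _)
    (fun k hk x a => (hEf k x a ▸ hE1 k (hsub hk) x a).le)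
    (fun k hk x a => (hE2 k (hsub hk) x a).le) hEB x a

/-- Lemma 4.6: value estimation variance bound. -/
theorem mdvi_value_estimation_variance_bound
    (α : ℝ) (hα0 : 0 ≤ α) (hα1 : α < 1)
    (S A : Type) [Fintype S] [Fintype A] [Nonempty S] [Nonempty A] [DecidableEq A]
    (P : S → A → S → ℝ) (hP : IsKernel P)
    (r : S → A → ℝ) (hr : ∀ x a, |r x a| ≤ 1)
    (γ H : ℝ) (hγ0 : 0 ≤ γ) (hγ1 : γ < 1) (hH : H = 1 / (1 - γ))
    (Qpol : (S → A → ℝ) → S → A → ℝ)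
    (hQ : ∀ po, IsPolicy po → bellmanOp P r γ po (Qpol po) = Qpol po)
    (pstar : S → A → ℝ) (hpstar : IsPolicy pstar)
    (hopt : ∀ po, IsPolicy po → ∀ x, polAct po (Qpol po) x ≤ polAct pstar (Qpol pstar) x)
    (K M : ℕ) (hM : 1 ≤ M)
    (y : ℕ → ℕ → S → A → S)
    (w v : ℕ → S → ℝ) (sq qv : ℕ → S → A → ℝ)
    (hs0 : ∀ x a, sq 0 x a = 0) (hw0 : ∀ x, w 0 x = 0)
    (hv : ∀ k x, v k x = w k x - α * w (k - 1) x)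
    (hqv : ∀ k x a, qv (k + 1) x a
      = r x a + (γ / (M : ℝ)) * ∑ m ∈ Finset.range M, v k (y k m x a))
    (hsq : ∀ k x a, sq (k + 1) x a = qv (k + 1) x a + α * sq k x a)
    (hwk : ∀ k x, w (k + 1) x = ⨆ a, sq (k + 1) x a)
    (pol : ℕ → S → A)
    (hgreedy : ∀ k x a, sq k x a ≤ sq k x (pol k x))
    (εf Ef : ℕ → S → A → ℝ)
    (hεf : ∀ k x a, εf (k + 1) x a
      = (γ / (M : ℝ)) * ∑ m ∈ Finset.range M, v k (y k m x a) - γ * mdpP P (v k) x a)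
    (hEf : ∀ k x a, Ef k x a = ∑ j ∈ Finset.range k, α ^ (k - 1 - j) * εf (j + 1) x a)
    (δ : ℝ) (hδ0 : 0 < δ) (hδ1 : δ < 1)
    (hE1 : ∀ k ∈ Finset.Icc 1 K, ∀ x a, |Ef k x a|
      < 3 * H * Real.sqrt (((1 : ℝ) / (1 - α)) *
          Real.log ((8 * K * Fintype.card S * Fintype.card A : ℝ) / δ) / (M : ℝ)))
    (hE2 : ∀ k ∈ Finset.Icc 1 K, ∀ x a, |εf k x a|
      < 3 * H * Real.sqrt (
          Real.log ((8 * K * Fintype.card S * Fintype.card A : ℝ) / δ) / (M : ℝ)))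
    :
    (∀ k ∈ Finset.Icc 1 K, ∀ x a,
      sigmaP P (v k) x a ≤
        2 * H * min 1
          (2 * max α γ ^ (k - 1)
            + (∑ j ∈ Finset.range (k - 1), γ ^ (k - 1 - j) * α ^ j) / ((1 : ℝ) / (1 - α))
            + 6 * H * Real.sqrt (
                Real.log ((8 * K * Fintype.card S * Fintype.card A : ℝ) / δ) / (M : ℝ)))
        + sigmaP P (polAct pstar (Qpol pstar)) x a) ∧
    (∀ x a, sigmaP P (v 0) x a = 0) :=
  mdvi_value_estimation_variance_bound_general α hα0 hα1 S A P hP r hr γ H hγ0 hγ1 hH Qpol hQ pstar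
    hpstar hopt K M y w v sq qv hs0 hw0 hv hqv hsq hwk εf Ef hεf hEf δ hE1 hE2
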